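/- For i ∈ [n-k+1], the Euler derivative of the A-hypergeometric polynomial satisfies x_i · ∂Z_{n,k}/∂x_i = x_i · Z_{n-i,k-1}(x), i.e., θ_i Z_{n,k} = x_i Z_{n-i,k-1}. -/

import Mathlib

/-!
Differentiating `x^s / s!` in `x_i` lowers `s_i` by one and kills the terms with `s_i = 0`, while
removing one part of size `i` is a bijection from the partitions of `n` into `k` parts that contain
`i` onto the partitions of `n - i` into `k - 1` parts. What remains is that `Z_{n-i,k-1}` is
written in `n - i` variables rather than `n`, which is harmless because no part exceeds `n - i`.
-/

open Finset

/-- `Z_{n,k}(x)` with indeterminates indexed by part sizes `1,...,n`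
(only the first `n-k+1` can appear with nonzero exponent). -/
noncomputable def Zhyp (n k : ℕ) (x : ℕ → ℝ) : ℝ :=
  ∑ s ∈ (Finset.Iic (fun _ => n : Fin n → ℕ)).filter
      (fun s => (∑ i, (i.1 + 1) * s i) = n ∧ (∑ i, s i) = k),
    ∏ i, x (i.1 + 1) ^ s i / (Nat.factorial (s i) : ℝ)

section ExpMonomial

variable {𝕜 ι : Type*} [Fintype ι]

noncomputable def expMonomial [Field 𝕜] (y : ι → 𝕜) (s : ι → ℕ) : 𝕜 :=
  ∏ j, y j ^ s j / (s j).factorial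

theorem expMonomial_update [Field 𝕜] [DecidableEq ι] (y : ι → 𝕜) (s : ι → ℕ) (a : ι)
    (t : 𝕜) :
    expMonomial (Function.update y a t) s
      = t ^ s a / (s a).factorial * ∏ j ∈ univ.erase a, y j ^ s j / (s j).factorial := by
  rw [expMonomial, ← mul_prod_erase univ _ (mem_univ a), Function.update_self]
  congr 1
  exact prod_congr rfl fun j hj => by rw [Function.update_of_ne (ne_of_mem_erase hj)]

theorem expMonomial_update_of_eq_zero [Field 𝕜] [DecidableEq ι] (y : ι → 𝕜) {s : ι → ℕ}
    {a : ι} (hs : s a = 0) (t : 𝕜) :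
    expMonomial (Function.update y a t) s = expMonomial y s := by
  conv_rhs => rw [← Function.update_eq_self a y]
  simp only [expMonomial_update, hs, pow_zero]

theorem hasDerivAt_pow_succ_div_factorial [NontriviallyNormedField 𝕜] [CharZero 𝕜]
    (n : ℕ) (t : 𝕜) :
    HasDerivAt (fun t : 𝕜 => t ^ (n + 1) / (n + 1).factorial) (t ^ n / n.factorial) t := by
  refine ((hasDerivAt_pow (n + 1) t).div_const _).congr_deriv ?_
  rw [Nat.factorial_succ, Nat.cast_mul, Nat.add_sub_cancel]
  field_simp

theorem hasDerivAt_expMonomial_update_add_single [NontriviallyNormedField 𝕜] [CharZero 𝕜]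
    [DecidableEq ι] (y : ι → 𝕜) (s : ι → ℕ) (a : ι) (t : 𝕜) :
    HasDerivAt (fun t => expMonomial (Function.update y a t) (s + Pi.single a 1))
      (expMonomial (Function.update y a t) s) t := by
  have hs (t : 𝕜) : expMonomial (Function.update y a t) (s + Pi.single a 1)
      = t ^ (s a + 1) / (s a + 1).factorial * ∏ j ∈ univ.erase a, y j ^ s j / (s j).factorial := by
    rw [expMonomial_update]
    refine congr_arg₂ _ (by simp) (prod_congr rfl fun j hj => ?_)
    simp [ne_of_mem_erase hj]
  simp only [hs, expMonomial_update]
  exact (hasDerivAt_pow_succ_div_factorial (s a) t).mul_const _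

theorem expMonomial_append_zero [Field 𝕜] {m d : ℕ} (y : Fin (m + d) → 𝕜)
    (s : Fin m → ℕ) :
    expMonomial y (Fin.append s 0) = expMonomial (fun j => y (Fin.castAdd d j)) s := by
  simp [expMonomial, Fin.prod_univ_add]

end ExpMonomial

/-- `s j` is the number of parts of size `j + 1`. -/
def partitionMultiplicities (m n k : ℕ) : Finset (Fin m → ℕ) :=
  (Iic (fun _ => n)).filter (fun s => (∑ j, (j.1 + 1) * s j) = n ∧ (∑ j, s j) = k)

noncomputable def ZhypIn (m n k : ℕ) (x : ℕ → ℝ) : ℝ :=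
  ∑ s ∈ partitionMultiplicities m n k, expMonomial (fun j : Fin m => x (j.1 + 1)) s

theorem Zhyp_eq_ZhypIn (n k : ℕ) (x : ℕ → ℝ) : Zhyp n k x = ZhypIn n n k x := rfl

section PartitionMultiplicities

variable {m n k : ℕ} {s : Fin m → ℕ}

theorem mul_le_of_mem_partitionMultiplicities (hs : s ∈ partitionMultiplicities m n k)
    (j : Fin m) : (j.1 + 1) * s j ≤ n := by
  rw [partitionMultiplicities, mem_filter] at hs
  exact hs.2.1 ▸ single_le_sum (f := fun j : Fin m => (j.1 + 1) * s j) (by simp) (mem_univ j)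

theorem mem_partitionMultiplicities :
    s ∈ partitionMultiplicities m n k ↔ (∑ j, (j.1 + 1) * s j) = n ∧ (∑ j, s j) = k := by
  refine ⟨fun hs => (mem_filter.mp hs).2, fun hs => mem_filter.mpr ⟨mem_Iic.mpr ?_, hs⟩⟩
  refine fun j => le_trans (Nat.le_mul_of_pos_left _ j.1.succ_pos) ?_
  exact hs.1 ▸ single_le_sum (f := fun j : Fin m => (j.1 + 1) * s j) (by simp) (mem_univ j)

theorem add_single_mem_partitionMultiplicities {a : Fin m} (ha : a.1 + 1 ≤ n) (hk : 1 ≤ k) :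
    s + Pi.single a 1 ∈ partitionMultiplicities m n k
      ↔ s ∈ partitionMultiplicities m (n - (a.1 + 1)) (k - 1) := by
  simp only [mem_partitionMultiplicities, Pi.add_apply, mul_add, sum_add_distrib,
    Pi.single_apply, mul_ite, mul_one, mul_zero, sum_ite_eq', mem_univ, if_true]
  omega

theorem filter_ne_zero_partitionMultiplicities {a : Fin m} (ha : a.1 + 1 ≤ n) (hk : 1 ≤ k) :
    (partitionMultiplicities m n k).filter (fun s => s a ≠ 0)
      = (partitionMultiplicities m (n - (a.1 + 1)) (k - 1)).map
          (addRightEmbedding (Pi.single a 1)) := by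
  ext s
  simp only [mem_filter, mem_map, addRightEmbedding_apply]
  constructor
  · rintro ⟨hs, hsa⟩
    have hcancel : s - Pi.single a 1 + Pi.single a 1 = s := by
      funext j
      rcases eq_or_ne j a with rfl | hj
      · simp only [Pi.add_apply, Pi.sub_apply, Pi.single_eq_same]
        omega
      · simp [hj]
    refine ⟨s - Pi.single a 1, ?_, hcancel⟩
    rwa [← add_single_mem_partitionMultiplicities ha hk, hcancel]
  · rintro ⟨s', hs', rfl⟩
    exact ⟨(add_single_mem_partitionMultiplicities ha hk).mpr hs', by simp⟩

theorem append_zero_mem_partitionMultiplicities {d : ℕ} :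
    Fin.append s (0 : Fin d → ℕ) ∈ partitionMultiplicities (m + d) n k
      ↔ s ∈ partitionMultiplicities m n k := by
  simp [mem_partitionMultiplicities, Fin.sum_univ_add]

theorem eq_zero_of_mem_partitionMultiplicities (hs : s ∈ partitionMultiplicities m n k)
    {j : Fin m} (hj : n ≤ j.1) : s j = 0 := by
  have := mul_le_of_mem_partitionMultiplicities hs j
  by_contra h
  have := Nat.le_mul_of_pos_right (j.1 + 1) (Nat.pos_of_ne_zero h)
  omega

end PartitionMultiplicities

theorem comp_update_succ {m : ℕ} (x : ℕ → ℝ) (a : Fin m) (t : ℝ) :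
    (fun j : Fin m => Function.update x (a.1 + 1) t (j.1 + 1))
      = Function.update (fun j : Fin m => x (j.1 + 1)) a t :=
  Function.update_comp_eq_of_injective x (Nat.succ_injective.comp Fin.val_injective) a t

theorem hasDerivAt_ZhypIn_update {m n k : ℕ} {a : Fin m} (ha : a.1 + 1 ≤ n) (hk : 1 ≤ k)
    (x : ℕ → ℝ) (t : ℝ) :
    HasDerivAt (fun t => ZhypIn m n k (Function.update x (a.1 + 1) t))
      (ZhypIn m (n - (a.1 + 1)) (k - 1) (Function.update x (a.1 + 1) t)) t := by
  set y : Fin m → ℝ := fun j => x (j.1 + 1)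
  have hsplit (t : ℝ) : ZhypIn m n k (Function.update x (a.1 + 1) t)
      = ∑ s ∈ partitionMultiplicities m (n - (a.1 + 1)) (k - 1),
          expMonomial (Function.update y a t) (s + Pi.single a 1)
        + ∑ s ∈ (partitionMultiplicities m n k).filter (fun s => ¬s a ≠ 0), expMonomial y s := by
    rw [ZhypIn, comp_update_succ, ← sum_filter_add_sum_filter_not _ (fun s => s a ≠ 0),
      filter_ne_zero_partitionMultiplicities ha hk, sum_map]
    refine congr_arg₂ _ rfl (sum_congr rfl fun s hs => ?_)
    exact expMonomial_update_of_eq_zero y (not_not.mp (mem_filter.mp hs).2) t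
  rw [funext hsplit, ZhypIn, comp_update_succ]
  exact (HasDerivAt.fun_sum fun s _ => hasDerivAt_expMonomial_update_add_single y s a t).add_const _

theorem ZhypIn_eq_of_le {m n : ℕ} (h : n ≤ m) (k : ℕ) (x : ℕ → ℝ) :
    ZhypIn m n k x = Zhyp n k x := by
  obtain ⟨d, rfl⟩ := Nat.exists_eq_add_of_le h
  have happend {s : Fin (n + d) → ℕ} (hs : s ∈ partitionMultiplicities (n + d) n k) :
      Fin.append (fun j => s (Fin.castAdd d j)) 0 = s := by
    conv_rhs => rw [← Fin.append_castAdd_natAdd (f := s)]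
    congr 1
    funext j
    exact (eq_zero_of_mem_partitionMultiplicities hs (j := Fin.natAdd n j)
      (Nat.le_add_right n j)).symm
  rw [Zhyp_eq_ZhypIn, ZhypIn, ZhypIn]
  refine sum_nbij' (fun s j => s (Fin.castAdd d j)) (fun s => Fin.append s 0) ?_ ?_ ?_ ?_ ?_
  · intro s hs
    rw [← append_zero_mem_partitionMultiplicities, happend hs]
    exact hs
  · intro s hs
    exact append_zero_mem_partitionMultiplicities.mpr hs
  · intro s hs
    exact happend hs
  · intro s _
    simp
  · intro s hs
    conv_lhs => rw [← happend hs]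
    rw [expMonomial_append_zero]
    rfl

theorem hasDerivAt_Zhyp_update {n k i : ℕ} (hk : 1 ≤ k) (hi1 : 1 ≤ i) (hin : i ≤ n)
    (x : ℕ → ℝ) (t : ℝ) :
    HasDerivAt (fun t => Zhyp n k (Function.update x i t))
      (Zhyp (n - i) (k - 1) (Function.update x i t)) t := by
  obtain ⟨a, rfl⟩ : ∃ a : Fin n, a.1 + 1 = i := ⟨⟨i - 1, by omega⟩, by simp only; omega⟩
  rw [← ZhypIn_eq_of_le (Nat.sub_le n _)]
  exact hasDerivAt_ZhypIn_update hin hk x t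

/-- the Euler derivative satisfies `θ_i Z_{n,k} = x_i Z_{n-i,k-1}`
for `i ∈ [n-k+1]` (with `Z_{m,j} = 0` when the support is empty, which holds by
definition of `Zhyp`). -/
theorem euler_derivative_Z (n k : ℕ) (hk : 1 ≤ k) (hkn : k ≤ n)
    (x : ℕ → ℝ) (i : ℕ) (hi1 : 1 ≤ i) (hi2 : i ≤ n - k + 1) :
    x i * deriv (fun t => Zhyp n k (Function.update x i t)) (x i)
      = x i * Zhyp (n - i) (k - 1) x := by
  have hderiv := hasDerivAt_Zhyp_update (n := n) hk hi1 (by omega) x (x i)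
  rw [Function.update_eq_self] at hderiv
  rw [hderiv.deriv]
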